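/- Let B ∈ ℝ³ and define t = (β/2)B and s = 2t/(1 + t·t). Then for any v⁻ ∈ ℝ³, the vector v⁺ = v⁻ + (v⁻ + v⁻ × t) × s satisfies ‖v⁺‖ = ‖v⁻‖. -/

import Mathlib

noncomputable section

/-- Dot product on ℝ³. -/
def dot3 (a b : Fin 3 → ℝ) : ℝ := a 0 * b 0 + a 1 * b 1 + a 2 * b 2

/-- Cross product on ℝ³. -/
def cross3 (a b : Fin 3 → ℝ) : Fin 3 → ℝ :=
  ![a 1 * b 2 - a 2 * b 1, a 2 * b 0 - a 0 * b 2, a 0 * b 1 - a 1 * b 0]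

/-- Euclidean norm on ℝ³. -/
def enorm3 (a : Fin 3 → ℝ) : ℝ := Real.sqrt (dot3 a a)

/-!
Write `w = v × t` and `u = (v + w) × t`, so that the rotated vector is `v + c u` with
`c = 2 / (1 + t·t)`. Since `w` is orthogonal to `v` and `t`, one finds `v·u = -w·w` and
`u·u = (1 + t·t) (w·w)`; hence `|v + c u|² - |v|² = c (w·w) (c (1 + t·t) - 2) = 0`.
-/

open Matrix

section BorisRotation

variable {R : Type*} [CommRing R]

def borisRotate (c : R) (t v : Fin 3 → R) : Fin 3 → R :=
  v + (v + v ⨯₃ t) ⨯₃ (c • t)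

theorem dot_cross_cross_self (v t : Fin 3 → R) : v ⬝ᵥ (v ⨯₃ t) ⨯₃ t = -(v ⨯₃ t ⬝ᵥ v ⨯₃ t) := by
  rw [triple_product_permutation, ← cross_anticomm v t, dotProduct_neg]

theorem add_cross_dot_add_cross (v t : Fin 3 → R) :
    (v + v ⨯₃ t) ⨯₃ t ⬝ᵥ (v + v ⨯₃ t) ⨯₃ t = (1 + t ⬝ᵥ t) * (v ⨯₃ t ⬝ᵥ v ⨯₃ t) := by
  have hv : v ⬝ᵥ v ⨯₃ t = 0 := dot_self_cross v t
  have ht : t ⬝ᵥ v ⨯₃ t = 0 := dot_cross_self v t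
  have hlagrange := cross_dot_cross v t v t
  rw [cross_dot_cross]
  simp only [add_dotProduct, dotProduct_add, hv, ht, dotProduct_comm (v ⨯₃ t) v,
    dotProduct_comm (v ⨯₃ t) t] at hlagrange ⊢
  rw [hlagrange]
  ring

theorem dotProduct_self_borisRotate {c : R} {t : Fin 3 → R} (hc : c * (1 + t ⬝ᵥ t) = 2)
    (v : Fin 3 → R) :
    borisRotate c t v ⬝ᵥ borisRotate c t v = v ⬝ᵥ v := by
  have hvu : v ⬝ᵥ (v + v ⨯₃ t) ⨯₃ t = -(v ⨯₃ t ⬝ᵥ v ⨯₃ t) := by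
    rw [LinearMap.map_add₂, dotProduct_add, dot_self_cross, dot_cross_cross_self, zero_add]
  have huu := add_cross_dot_add_cross v t
  set u := (v + v ⨯₃ t) ⨯₃ t
  have hrot : borisRotate c t v = v + c • u := by
    simp only [borisRotate, u, map_smul]
  rw [hrot]
  simp only [add_dotProduct, dotProduct_add, smul_dotProduct, dotProduct_smul, smul_eq_mul,
    dotProduct_comm u v, hvu, huu]
  linear_combination c * (v ⨯₃ t ⬝ᵥ v ⨯₃ t) * hc

end BorisRotation

theorem dot3_eq_dotProduct (a b : Fin 3 → ℝ) : dot3 a b = a ⬝ᵥ b :=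
  (vec3_dotProduct a b).symm

/-- The rotation step of the Boris algorithm preserves the Euclidean norm. -/
theorem boris_rotation_preserves_norm (B : Fin 3 → ℝ) (β : ℝ) (vminus : Fin 3 → ℝ) :
    let t := (β / 2) • B
    let s := (2 / (1 + dot3 t t)) • t
    let vplus := vminus + cross3 (vminus + cross3 vminus t) s
    enorm3 vplus = enorm3 vminus := by
  intro t s vplus
  have hpos : 0 < 1 + t ⬝ᵥ t :=
    add_pos_of_pos_of_nonneg one_pos (by simpa using dotProduct_self_star_nonneg t)
  have hc : 2 / (1 + t ⬝ᵥ t) * (1 + t ⬝ᵥ t) = 2 := div_mul_cancel₀ 2 hpos.ne'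
  have hrot : vplus = borisRotate (2 / (1 + t ⬝ᵥ t)) t vminus := by
    simp only [vplus, s, dot3_eq_dotProduct]
    rfl
  rw [enorm3, enorm3, dot3_eq_dotProduct, dot3_eq_dotProduct, hrot, dotProduct_self_borisRotate hc]
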